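/- arXiv:1910.00151 — 3 statements merged into one kernel-verified Lean document; each statement's English description precedes it below -/
import Mathlib

section
/- Conservation of mass for the 1D fully discrete scheme: if ρ^{n+1} ∈ ℝ^N satisfies the fully discrete scheme with data ρ^n ∈ ℝ^N and τ > 0, then Σ_{j=1}^N h_j ρ^{n+1}_j = Σ_{j=1}^N h_j ρ^n_j. -/
/-!
Multiplying the `j`-th equation of the scheme by `τ h_j` shows that the mass of cell `j` changes
by `τ (C_{j+1/2} - C_{j-1/2})`. Summed over all cells these changes telescope to
`τ (C_{N+1/2} - C_{1/2})`, which vanishes by the no-flux boundary conditions.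
-/

open Finset

theorem Finset.sum_Icc_one_sub_pred {M : Type*} [AddCommGroup M] (f : ℕ → M) (n : ℕ) :
    ∑ i ∈ Icc 1 n, (f i - f (i - 1)) = f n - f 0 := by
  induction n with
  | zero => simp
  | succ n ih => rw [sum_Icc_succ_top (by omega), ih, Nat.add_sub_cancel]; abel

theorem sum_mul_eq_add_boundary_flux {K : Type*} [Field K] {N : ℕ} {h u v C : ℕ → K} {τ : K}
    (hτ : τ ≠ 0) (hh : ∀ j ∈ Icc 1 N, h j ≠ 0)
    (hstep : ∀ j ∈ Icc 1 N, (v j - u j) / τ = (C j - C (j - 1)) / h j) :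
    ∑ j ∈ Icc 1 N, h j * v j = ∑ j ∈ Icc 1 N, h j * u j + τ * (C N - C 0) := by
  have hcell : ∀ j ∈ Icc 1 N, h j * v j = h j * u j + τ * (C j - C (j - 1)) := fun j hj => by
    linear_combination (div_eq_div_iff hτ (hh j hj)).mp (hstep j hj)
  rw [sum_congr rfl hcell, sum_add_distrib, ← mul_sum, sum_Icc_one_sub_pred]

theorem fully_discrete_mass_conservation_1d_general
    (N : ℕ)
    (h : ℕ → ℝ) (hpos : ∀ j ∈ Finset.Icc 1 N, 0 < h j)
    (ρn ρ1 : ℕ → ℝ) (τ : ℝ) (hτ : 0 < τ)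
    (C : ℕ → ℝ)
    (hC0 : C 0 = 0) (hCN : C N = 0)
    (hscheme : ∀ j ∈ Finset.Icc 1 N, (ρ1 j - ρn j) / τ = (C j - C (j - 1)) / h j)
 :
    ∑ j ∈ Finset.Icc 1 N, h j * ρ1 j = ∑ j ∈ Finset.Icc 1 N, h j * ρn j := by
  rw [sum_mul_eq_add_boundary_flux hτ.ne' (fun j hj => (hpos j hj).ne') hscheme, hC0, hCN,
    sub_zero, mul_zero, add_zero]

theorem fully_discrete_mass_conservation_1d
    (N : ℕ) (hN : 2 ≤ N)
    (h : ℕ → ℝ) (hpos : ∀ j ∈ Finset.Icc 1 N, 0 < h j)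
    (a : ℝ)
    (xhalf xc hhalf : ℕ → ℝ)
    (hxhalf0 : xhalf 0 = a)
    (hxhalf : ∀ j ∈ Finset.Icc 1 N, xhalf j = xhalf (j - 1) + h j)
    (hxc : ∀ j ∈ Finset.Icc 1 N, xc j = xhalf (j - 1) + h j / 2)
    (hhhalf : ∀ j ∈ Finset.Icc 1 (N - 1), hhalf j = (h j + h (j + 1)) / 2)
    (V W : ℝ → ℝ)
    (Q : ℝ → (ℕ → ℝ) → ℝ)
    (hQ : ∀ (x : ℝ) (v : ℕ → ℝ), Q x v =
      Real.exp (-V x - ∑ i ∈ Finset.Icc 1 N, h i * W (xc i - x) * v i))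
    (ρn ρ1 : ℕ → ℝ) (τ : ℝ) (hτ : 0 < τ)
    (Mn Mnhalf : ℕ → ℝ)
    (hMn : ∀ j ∈ Finset.Icc 1 N, Mn j = Q (xc j) ρn)
    (hMnhalf : ∀ j ∈ Finset.Icc 1 (N - 1), Mnhalf j = Q (xhalf j) ρn)
    (C : ℕ → ℝ)
    (hC : ∀ j ∈ Finset.Icc 1 (N - 1),
      C j = Mnhalf j / hhalf j * (ρ1 (j + 1) / Mn (j + 1) - ρ1 j / Mn j))
    (hC0 : C 0 = 0) (hCN : C N = 0)
    (hscheme : ∀ j ∈ Finset.Icc 1 N, (ρ1 j - ρn j) / τ = (C j - C (j - 1)) / h j)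
 :
    ∑ j ∈ Finset.Icc 1 N, h j * ρ1 j = ∑ j ∈ Finset.Icc 1 N, h j * ρn j :=
  fully_discrete_mass_conservation_1d_general N h hpos ρn ρ1 τ hτ C hC0 hCN hscheme
end

section
/- Zero entropy production characterizes steady states of the 1D fully discrete scheme: if ρ^{n+1} ∈ ℝ^N satisfies the fully discrete scheme with data ρ^n ∈ ℝ^N and τ > 0, ρ^{n+1}_j > 0 for all j, and Σ_{j=1}^N h_j (ρ^{n+1}_j − ρ^n_j) · log(ρ^{n+1}_j/M^n_j) = 0, then ρ^{n+1}_j = ρ^n_j for all 1 ≤ j ≤ N. -/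
/-!
Write `u_j = ρ^{n+1}_j / M^n_j`, so that the flux is `C_{j+1/2} = k_j (u_{j+1} - u_j)` with
`k_j = M^n_{j+1/2} / h_{j+1/2} > 0`. By the scheme, the entropy production equals
`τ ∑_j (C_{j+1/2} - C_{j-1/2}) log u_j`, and summation by parts with the no-flux boundary
conditions turns it into `-τ ∑_j k_j (u_{j+1} - u_j)(log u_{j+1} - log u_j)`. Since `log` is
strictly increasing every summand is nonnegative, so all vanish: `u` is constant, every flux is
zero, and the scheme gives `ρ^{n+1} = ρ^n`.
-/

open Finset Real

theorem Finset.sum_Icc_sub_mul_by_parts {R : Type*} [CommRing R] (C f : ℕ → R)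
    (hC0 : C 0 = 0) (n : ℕ) :
    ∑ j ∈ Icc 1 n, (C j - C (j - 1)) * f j
      = C n * f n - ∑ j ∈ range n, C j * (f (j + 1) - f j) := by
  induction n with
  | zero => simp [hC0]
  | succ n ih =>
    rw [sum_Icc_succ_top (by omega), ih, sum_range_succ, Nat.add_sub_cancel]
    ring

theorem Real.sub_mul_log_sub_log_pos {x y : ℝ} (hx : 0 < x) (hy : 0 < y) (hxy : x ≠ y) :
    0 < (y - x) * (log y - log x) := by
  rcases hxy.lt_or_gt with hlt | hlt
  · exact mul_pos (by linarith) (by linarith [log_lt_log hx hlt])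
  · exact mul_pos_of_neg_of_neg (by linarith) (by linarith [log_lt_log hy hlt])

theorem Real.sub_mul_log_sub_log_nonneg {x y : ℝ} (hx : 0 < x) (hy : 0 < y) :
    0 ≤ (y - x) * (log y - log x) := by
  rcases eq_or_ne x y with rfl | hxy
  · simp
  · exact (sub_mul_log_sub_log_pos hx hy hxy).le

theorem flux_eq_zero_of_sum_sub_mul_log_eq_zero {N : ℕ} {C k u : ℕ → ℝ}
    (hC0 : C 0 = 0) (hCN : C N = 0) (hk : ∀ j ∈ Ico 1 N, 0 < k j)
    (hu : ∀ j ∈ Icc 1 N, 0 < u j) (hC : ∀ j ∈ Ico 1 N, C j = k j * (u (j + 1) - u j))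
    (hsum : ∑ j ∈ Icc 1 N, (C j - C (j - 1)) * log (u j) = 0) :
    ∀ j ≤ N, C j = 0 := by
  have hu' : ∀ j ∈ Ico 1 N, 0 < u j ∧ 0 < u (j + 1) := fun j hj => by
    simp only [mem_Ico] at hj
    exact ⟨hu j (mem_Icc.2 ⟨hj.1, hj.2.le⟩), hu (j + 1) (mem_Icc.2 ⟨by omega, hj.2⟩)⟩
  have hterm : ∀ j ∈ Ico 1 N, C j * (log (u (j + 1)) - log (u j))
      = k j * ((u (j + 1) - u j) * (log (u (j + 1)) - log (u j))) := fun j hj => by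
    rw [hC j hj, mul_assoc]
  have hnonneg : ∀ j ∈ range N, 0 ≤ C j * (log (u (j + 1)) - log (u j)) := by
    intro j hj
    by_cases hj0 : j = 0
    · simp [hj0, hC0]
    have hj : j ∈ Ico 1 N := by simp only [mem_Ico, mem_range] at hj ⊢; omega
    rw [hterm j hj]
    exact mul_nonneg (hk j hj).le (sub_mul_log_sub_log_nonneg (hu' j hj).1 (hu' j hj).2)
  have hzero : ∑ j ∈ range N, C j * (log (u (j + 1)) - log (u j)) = 0 := by
    rw [Finset.sum_Icc_sub_mul_by_parts _ _ hC0, hCN] at hsum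
    linarith
  have hinterior : ∀ j ∈ Ico 1 N, C j = 0 := by
    intro j hj
    have hj' : j ∈ range N := by simp only [mem_Ico, mem_range] at hj ⊢; omega
    have hterm0 := (sum_eq_zero_iff_of_nonneg hnonneg).mp hzero j hj'
    by_contra hCj
    have hne : u j ≠ u (j + 1) := fun heq => hCj (by rw [hC j hj, heq, sub_self, mul_zero])
    rw [hterm j hj] at hterm0
    exact (mul_pos (hk j hj) (sub_mul_log_sub_log_pos (hu' j hj).1 (hu' j hj).2 hne)).ne' hterm0
  intro j hj
  rcases Nat.eq_zero_or_pos j with rfl | hpos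
  · exact hC0
  rcases hj.eq_or_lt with rfl | hlt
  · exact hCN
  exact hinterior j (mem_Ico.2 ⟨hpos, hlt⟩)

theorem zero_entropy_production_steady_state_1d_general
    (N : ℕ)
    (h : ℕ → ℝ) (hpos : ∀ j ∈ Finset.Icc 1 N, 0 < h j)
    (xhalf xc hhalf : ℕ → ℝ)
    (hhhalf : ∀ j ∈ Finset.Icc 1 (N - 1), hhalf j = (h j + h (j + 1)) / 2)
    (V W : ℝ → ℝ)
    (Q : ℝ → (ℕ → ℝ) → ℝ)
    (hQ : ∀ (x : ℝ) (v : ℕ → ℝ), Q x v =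
      Real.exp (-V x - ∑ i ∈ Finset.Icc 1 N, h i * W (xc i - x) * v i))
    (ρn ρ1 : ℕ → ℝ) (τ : ℝ) (hτ : 0 < τ)
    (Mn Mnhalf : ℕ → ℝ)
    (hMn : ∀ j ∈ Finset.Icc 1 N, Mn j = Q (xc j) ρn)
    (hMnhalf : ∀ j ∈ Finset.Icc 1 (N - 1), Mnhalf j = Q (xhalf j) ρn)
    (C : ℕ → ℝ)
    (hC : ∀ j ∈ Finset.Icc 1 (N - 1),
      C j = Mnhalf j / hhalf j * (ρ1 (j + 1) / Mn (j + 1) - ρ1 j / Mn j))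
    (hC0 : C 0 = 0) (hCN : C N = 0)
    (hscheme : ∀ j ∈ Finset.Icc 1 N, (ρ1 j - ρn j) / τ = (C j - C (j - 1)) / h j)
    (hρ1pos : ∀ j ∈ Finset.Icc 1 N, 0 < ρ1 j)
    (hzero : ∑ j ∈ Finset.Icc 1 N, h j * (ρ1 j - ρn j) * Real.log (ρ1 j / Mn j) = 0) :
    ∀ j ∈ Finset.Icc 1 N, ρ1 j = ρn j := by
  have hedge : ∀ j ∈ Ico 1 N, j ∈ Icc 1 (N - 1) ∧ j + 1 ∈ Icc 1 N := fun j hj => by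
    simp only [mem_Ico, mem_Icc] at hj ⊢; omega
  have hweight : ∀ j ∈ Ico 1 N, 0 < Mnhalf j / hhalf j := fun j hj => by
    have ⟨hj, hj1⟩ := hedge j hj
    rw [hMnhalf j hj, hQ, hhhalf j hj]
    have := hpos j (Icc_subset_Icc_right (Nat.sub_le N 1) hj)
    have := hpos (j + 1) hj1
    positivity
  have hu : ∀ j ∈ Icc 1 N, 0 < ρ1 j / Mn j := fun j hj => by
    rw [hMn j hj, hQ]; exact div_pos (hρ1pos j hj) (exp_pos _)
  have hstep : ∀ j ∈ Icc 1 N, h j * (ρ1 j - ρn j) = τ * (C j - C (j - 1)) := fun j hj => by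
    have := hscheme j hj
    field_simp [(hpos j hj).ne'] at this
    linarith
  have hsum : ∑ j ∈ Icc 1 N, (C j - C (j - 1)) * log (ρ1 j / Mn j) = 0 := by
    refine (mul_eq_zero.mp ?_).resolve_left hτ.ne'
    rw [← hzero, mul_sum]
    refine sum_congr rfl fun j hj => ?_
    rw [hstep j hj]; ring
  have hflux := flux_eq_zero_of_sum_sub_mul_log_eq_zero hC0 hCN hweight hu
    (fun j hj => hC j (hedge j hj).1) hsum
  intro j hj
  have hj' := mem_Icc.mp hj
  have := hstep j hj
  rw [hflux j hj'.2, hflux (j - 1) (by omega), sub_self, mul_zero] at this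
  linarith [(mul_eq_zero.mp this).resolve_left (hpos j hj).ne']

theorem zero_entropy_production_steady_state_1d
    (N : ℕ) (hN : 2 ≤ N)
    (h : ℕ → ℝ) (hpos : ∀ j ∈ Finset.Icc 1 N, 0 < h j)
    (a : ℝ)
    (xhalf xc hhalf : ℕ → ℝ)
    (hxhalf0 : xhalf 0 = a)
    (hxhalf : ∀ j ∈ Finset.Icc 1 N, xhalf j = xhalf (j - 1) + h j)
    (hxc : ∀ j ∈ Finset.Icc 1 N, xc j = xhalf (j - 1) + h j / 2)
    (hhhalf : ∀ j ∈ Finset.Icc 1 (N - 1), hhalf j = (h j + h (j + 1)) / 2)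
    (V W : ℝ → ℝ)
    (Q : ℝ → (ℕ → ℝ) → ℝ)
    (hQ : ∀ (x : ℝ) (v : ℕ → ℝ), Q x v =
      Real.exp (-V x - ∑ i ∈ Finset.Icc 1 N, h i * W (xc i - x) * v i))
    (ρn ρ1 : ℕ → ℝ) (τ : ℝ) (hτ : 0 < τ)
    (Mn Mnhalf : ℕ → ℝ)
    (hMn : ∀ j ∈ Finset.Icc 1 N, Mn j = Q (xc j) ρn)
    (hMnhalf : ∀ j ∈ Finset.Icc 1 (N - 1), Mnhalf j = Q (xhalf j) ρn)
    (C : ℕ → ℝ)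
    (hC : ∀ j ∈ Finset.Icc 1 (N - 1),
      C j = Mnhalf j / hhalf j * (ρ1 (j + 1) / Mn (j + 1) - ρ1 j / Mn j))
    (hC0 : C 0 = 0) (hCN : C N = 0)
    (hscheme : ∀ j ∈ Finset.Icc 1 N, (ρ1 j - ρn j) / τ = (C j - C (j - 1)) / h j)
    (hρ1pos : ∀ j ∈ Finset.Icc 1 N, 0 < ρ1 j)
    (hzero : ∑ j ∈ Finset.Icc 1 N, h j * (ρ1 j - ρn j) * Real.log (ρ1 j / Mn j) = 0) :
    ∀ j ∈ Finset.Icc 1 N, ρ1 j = ρn j :=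
  zero_entropy_production_steady_state_1d_general N h hpos xhalf xc hhalf hhhalf V W Q hQ ρn ρ1 τ hτ
    Mn Mnhalf hMn hMnhalf C hC hC0 hCN hscheme hρ1pos hzero
end

section
/- Boundedness of the local averaging set (Theorem on |S_k|): under the stated assumptions, if K² · ∫_0^1 ρ(x_{1/2} + θ·η) dθ > (λ + C) · α² · η², where η = Σ_{j=1}^K h_j, then Σ_{j=1}^K h_j ρ_j > 0; that is, positive local averages are obtained over a block of K cells satisfying this condition. -/
/-! On a cell of width `h_j` the midpoint rule has error at most `24⁻¹ sup |ρ''| h_j³`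
(second-order Taylor expansion about the centre, whose linear term integrates to zero), and
`h_j³ ≤ α² h² h_j`. Hence `∑ h_j ρ_j` differs from `∫ ρ = η ∫₀¹ ρ(x_{1/2} + θη) dθ` by at most
`(λ + C) α² h² η`, and since `K h ≤ η` this is at most `(λ + C) α² η³ / K²`, which the hypothesis
makes smaller than the integral. -/

open Finset

theorem Finset.sum_Icc_one_sub_pred_s19 {G : Type*} [AddCommGroup G] (x : ℕ → G) (K : ℕ) :
    ∑ j ∈ Icc 1 K, (x j - x (j - 1)) = x K - x 0 := by
  induction K with
  | zero => simp
  | succ K ih => rw [sum_Icc_succ_top (by omega), ih]; simp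

theorem sum_integral_adjacent_intervals_Icc_one {f : ℝ → ℝ} (hf : Continuous f) (x : ℕ → ℝ)
    (K : ℕ) :
    ∑ j ∈ Icc 1 K, ∫ t in x (j - 1)..x j, f t = ∫ t in x 0..x K, f t := by
  rw [← intervalIntegral.integral_interval_sub_left (hf.intervalIntegrable _ _)
    (hf.intervalIntegrable _ _), ← sum_Icc_one_sub_pred_s19 (fun j => ∫ t in x 0..x j, f t)]
  exact sum_congr rfl fun j _ => (intervalIntegral.integral_interval_sub_left
    (hf.intervalIntegrable _ _) (hf.intervalIntegrable _ _)).symm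

theorem abs_sub_sub_deriv_mul_le {f : ℝ → ℝ} (hf : ContDiff ℝ 2 f) {M x₀ x : ℝ}
    (hM : ∀ y ∈ Set.uIcc x₀ x, |iteratedDeriv 2 f y| ≤ M) :
    |f x - f x₀ - deriv f x₀ * (x - x₀)| ≤ M / 2 * (x - x₀) ^ 2 := by
  rcases eq_or_ne x₀ x with rfl | hne
  · simp
  obtain ⟨y, hy, hxy⟩ := taylor_mean_remainder_lagrange_iteratedDeriv (n := 1) hne hf.contDiffOn
  have hderiv : derivWithin f (Set.uIcc x₀ x) x₀ = deriv f x₀ :=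
    ((hf.differentiable two_ne_zero) x₀).derivWithin (uniqueDiffOn_uIcc hne x₀ Set.left_mem_uIcc)
  norm_num [taylorWithinEval_succ, hderiv, Nat.factorial] at hxy
  calc |f x - f x₀ - deriv f x₀ * (x - x₀)| = |iteratedDeriv 2 f y| / 2 * (x - x₀) ^ 2 := by
        rw [show f x - f x₀ - deriv f x₀ * (x - x₀) = iteratedDeriv 2 f y / 2 * (x - x₀) ^ 2 by
          linear_combination hxy, abs_mul, abs_div, abs_two, abs_sq]
    _ ≤ M / 2 * (x - x₀) ^ 2 := by gcongr; exact hM y (Set.Ioo_subset_Icc_self hy)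

theorem abs_integral_sub_mul_midpoint_le {f : ℝ → ℝ} (hf : ContDiff ℝ 2 f) {M c d : ℝ}
    (hcd : c ≤ d) (hM : ∀ y ∈ Set.Icc c d, |iteratedDeriv 2 f y| ≤ M) :
    |(∫ t in c..d, f t) - (d - c) * f ((c + d) / 2)| ≤ M / 24 * (d - c) ^ 3 := by
  set m := (c + d) / 2 with hm_def
  have hm : m ∈ Set.Icc c d := ⟨by linarith, by linarith⟩
  have hlin : ∫ t in c..d, (f m + deriv f m * (t - m)) = (d - c) * f m := by
    rw [intervalIntegral.integral_add intervalIntegrable_const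
      ((by fun_prop : Continuous fun t => deriv f m * (t - m)).intervalIntegrable _ _),
      intervalIntegral.integral_const_mul,
      intervalIntegral.integral_comp_sub_right (fun t => t) m, intervalIntegral.integral_const,
      integral_id, smul_eq_mul, hm_def]
    ring
  rw [← hlin, ← intervalIntegral.integral_sub (hf.continuous.intervalIntegrable _ _)
    ((by fun_prop : Continuous fun t => f m + deriv f m * (t - m)).intervalIntegrable _ _)]
  calc |∫ t in c..d, (f t - (f m + deriv f m * (t - m)))|
      ≤ ∫ t in c..d, M / 2 * (t - m) ^ 2 := by
        rw [← Real.norm_eq_abs]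
        refine intervalIntegral.norm_integral_le_of_norm_le hcd
          (MeasureTheory.ae_of_all _ fun t ht => ?_)
          ((by fun_prop : Continuous fun t => M / 2 * (t - m) ^ 2).intervalIntegrable _ _)
        rw [Real.norm_eq_abs, ← sub_sub]
        exact abs_sub_sub_deriv_mul_le hf fun y hy =>
          hM y (Set.uIcc_subset_Icc hm (Set.Ioc_subset_Icc_self ht) hy)
    _ = M / 24 * (d - c) ^ 3 := by
        rw [intervalIntegral.integral_const_mul,
          intervalIntegral.integral_comp_sub_right (fun t => t ^ 2) m, integral_pow, hm_def]
        ring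

theorem abs_integral_sub_sum_midpoint_le {f : ℝ → ℝ} (hf : ContDiff ℝ 2 f) {x : ℕ → ℝ} {K : ℕ}
    {M : ℝ} (hx : MonotoneOn x (Set.Iic K))
    (hM : ∀ y ∈ Set.Icc (x 0) (x K), |iteratedDeriv 2 f y| ≤ M) :
    |(∫ t in x 0..x K, f t) - ∑ j ∈ Icc 1 K, (x j - x (j - 1)) * f ((x (j - 1) + x j) / 2)|
      ≤ M / 24 * ∑ j ∈ Icc 1 K, (x j - x (j - 1)) ^ 3 := by
  rw [← sum_integral_adjacent_intervals_Icc_one hf.continuous, ← sum_sub_distrib, mul_sum]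
  refine (abs_sum_le_sum_abs _ _).trans (sum_le_sum fun j hj => ?_)
  have hjK : j ≤ K := (mem_Icc.1 hj).2
  have hmem : ∀ {i}, i ≤ j → i ∈ Set.Iic K := fun hi => Set.mem_Iic.2 (hi.trans hjK)
  refine abs_integral_sub_mul_midpoint_le hf (hx (hmem (j.sub_le 1)) (hmem le_rfl) (j.sub_le 1))
    fun y hy => hM y ⟨?_, ?_⟩
  · exact (hx (hmem (Nat.zero_le _)) (hmem (j.sub_le 1)) (Nat.zero_le _)).trans hy.1
  · exact hy.2.trans (hx (hmem le_rfl) Set.self_mem_Iic hjK)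

theorem Finset.sum_pow_three_le_sq_mul_sum {ι : Type*} {s : Finset ι} {h : ι → ℝ} {b : ℝ}
    (hh : ∀ j ∈ s, 0 ≤ h j ∧ h j ≤ b) : ∑ j ∈ s, h j ^ 3 ≤ b ^ 2 * ∑ j ∈ s, h j := by
  rw [mul_sum]
  refine sum_le_sum fun j hj => ?_
  obtain ⟨h0, hb⟩ := hh j hj
  calc h j ^ 3 = h j ^ 2 * h j := by ring
    _ ≤ b ^ 2 * h j := by gcongr

theorem abs_integral_sub_sum_mul_le {f : ℝ → ℝ} (hf : ContDiff ℝ 2 f) {K : ℕ}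
    {x h c g : ℕ → ℝ} {hmin α M C : ℝ}
    (hx : ∀ j ∈ Icc 1 K, x j = x (j - 1) + h j) (hc : ∀ j ∈ Icc 1 K, c j = x (j - 1) + h j / 2)
    (hh : ∀ j ∈ Icc 1 K, 0 ≤ h j ∧ h j ≤ α * hmin)
    (hM : ∀ y ∈ Set.Icc (x 0) (x K), |iteratedDeriv 2 f y| ≤ M)
    (hg : ∀ j ∈ Icc 1 K, |g j - f (c j)| ≤ C * hmin ^ 2) :
    |(∫ t in x 0..x K, f t) - ∑ j ∈ Icc 1 K, h j * g j|
      ≤ (M / 24 * α ^ 2 + C) * hmin ^ 2 * ∑ j ∈ Icc 1 K, h j := by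
  have hmono : MonotoneOn x (Set.Iic K) :=
    monotoneOn_of_le_add_one Set.ordConnected_Iic fun i _ _ hi => by
      have hi' : i + 1 ∈ Icc 1 K := mem_Icc.2 ⟨by omega, hi⟩
      rw [hx _ hi', Nat.add_sub_cancel]
      exact le_add_of_nonneg_right (hh _ hi').1
  have hmid := abs_integral_sub_sum_midpoint_le hf hmono hM
  have hcell : ∀ j ∈ Icc 1 K, x j - x (j - 1) = h j := fun j hj => by
    rw [hx j hj, add_sub_cancel_left]
  have hcentre : ∀ j ∈ Icc 1 K, (x (j - 1) + x j) / 2 = c j := fun j hj => by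
    rw [hx j hj, hc j hj]; ring
  rw [sum_congr rfl (f := fun j => (x j - x (j - 1)) * f ((x (j - 1) + x j) / 2))
      fun j hj => by rw [hcell j hj, hcentre j hj],
    sum_congr rfl (f := fun j => (x j - x (j - 1)) ^ 3) fun j hj => by rw [hcell j hj]] at hmid
  have hcubes := sum_pow_three_le_sq_mul_sum hh
  have happrox : |∑ j ∈ Icc 1 K, h j * f (c j) - ∑ j ∈ Icc 1 K, h j * g j|
      ≤ C * hmin ^ 2 * ∑ j ∈ Icc 1 K, h j := by
    rw [← sum_sub_distrib, mul_sum]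
    refine (abs_sum_le_sum_abs _ _).trans (sum_le_sum fun j hj => ?_)
    rw [← mul_sub, abs_mul, abs_of_nonneg (hh j hj).1, abs_sub_comm, mul_comm]
    exact mul_le_mul_of_nonneg_right (hg j hj) (hh j hj).1
  have hM0 : 0 ≤ M := (abs_nonneg _).trans <| hM (x 0)
    ⟨le_rfl, hmono (Set.mem_Iic.2 K.zero_le) Set.self_mem_Iic K.zero_le⟩
  calc |(∫ t in x 0..x K, f t) - ∑ j ∈ Icc 1 K, h j * g j|
      ≤ |(∫ t in x 0..x K, f t) - ∑ j ∈ Icc 1 K, h j * f (c j)|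
        + |∑ j ∈ Icc 1 K, h j * f (c j) - ∑ j ∈ Icc 1 K, h j * g j| := abs_sub_le _ _ _
    _ ≤ M / 24 * ((α * hmin) ^ 2 * ∑ j ∈ Icc 1 K, h j) + C * hmin ^ 2 * ∑ j ∈ Icc 1 K, h j :=
        add_le_add (hmid.trans (by gcongr)) happrox
    _ = (M / 24 * α ^ 2 + C) * hmin ^ 2 * ∑ j ∈ Icc 1 K, h j := by ring

theorem integral_eq_mul_integral_comp_add_mul (f : ℝ → ℝ) (a η : ℝ) :
    ∫ t in a..a + η, f t = η * ∫ t in (0 : ℝ)..1, f (a + t * η) := by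
  simp_rw [mul_comm _ η]
  rw [← smul_eq_mul, intervalIntegral.smul_integral_comp_add_mul]
  simp

theorem pos_of_mul_sq_lt_of_sub_le {k m η I S B : ℝ} (hB : 0 ≤ B) (hm : 0 ≤ k * m)
    (hkm : k * m ≤ η) (hη : 0 < η) (hcond : B * η ^ 2 < k ^ 2 * I)
    (hS : η * I - B * m ^ 2 * η ≤ S) : 0 < S := by
  have hk2S : 0 < k ^ 2 * S := calc
    0 < η * (k ^ 2 * I - B * η ^ 2) := mul_pos hη (sub_pos.2 hcond)
    _ ≤ k ^ 2 * (η * I - B * m ^ 2 * η) := by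
      nlinarith [mul_le_mul_of_nonneg_left (pow_le_pow_left₀ hm hkm 2) (by positivity : 0 ≤ B * η)]
    _ ≤ k ^ 2 * S := by gcongr
  exact pos_of_mul_pos_right hk2S (sq_nonneg k)

theorem local_average_positivity_general
    (K : ℕ) (hK : 1 ≤ K)
    (h : ℕ → ℝ)
    (a : ℝ)
    (xhalf xc : ℕ → ℝ)
    (hxhalf0 : xhalf 0 = a)
    (hxhalf : ∀ j ∈ Finset.Icc 1 K, xhalf j = xhalf (j - 1) + h j)
    (hxc : ∀ j ∈ Finset.Icc 1 K, xc j = xhalf (j - 1) + h j / 2)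
    (hmin : ℝ) (hhmin : 0 < hmin)
    (α : ℝ) (hα : 1 ≤ α)
    (hbound : ∀ j ∈ Finset.Icc 1 K, hmin ≤ h j ∧ h j ≤ α * hmin)
    (ρ : ℝ → ℝ) (hρ : ContDiff ℝ 2 ρ)
    (lam : ℝ)
    (hlam : lam = 1 / 24 * sSup ((fun x => |iteratedDeriv 2 ρ x|) '' Set.Icc a (xhalf K)))
    (ρd : ℕ → ℝ) (Cc : ℝ) (hCc : 0 ≤ Cc)
    (happrox : ∀ j ∈ Finset.Icc 1 K, |ρd j - ρ (xc j)| ≤ Cc * hmin ^ 2)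
    (η : ℝ) (hη : η = ∑ j ∈ Finset.Icc 1 K, h j)
    (hcond : (lam + Cc) * α ^ 2 * η ^ 2 <
      (K : ℝ) ^ 2 * ∫ t in (0 : ℝ)..1, ρ (a + t * η)) :
    0 < ∑ j ∈ Finset.Icc 1 K, h j * ρd j := by
  set M := sSup ((fun x => |iteratedDeriv 2 ρ x|) '' Set.Icc a (xhalf K))
  have hM : ∀ y ∈ Set.Icc a (xhalf K), |iteratedDeriv 2 ρ y| ≤ M := fun y hy =>
    (hρ.continuous_iteratedDeriv 2 le_rfl).abs.continuousOn.le_sSup_image_Icc hy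
  have hlam0 : 0 ≤ lam := by
    have : 0 ≤ M := Real.sSup_nonneg fun _ ⟨_, _, hy⟩ => hy ▸ abs_nonneg _
    rw [hlam]; positivity
  have hxK : xhalf K = a + η := by
    rw [hη, ← hxhalf0, ← sub_eq_iff_eq_add', ← sum_Icc_one_sub_pred_s19]
    exact sum_congr rfl fun j hj => by rw [hxhalf j hj, add_sub_cancel_left]
  have hquad := abs_integral_sub_sum_mul_le hρ hxhalf hxc
    (fun j hj => ⟨hhmin.le.trans (hbound j hj).1, (hbound j hj).2⟩) (hxhalf0 ▸ hM) happrox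
  rw [hxhalf0, hxK, ← hη, integral_eq_mul_integral_comp_add_mul,
    show M / 24 = lam by rw [hlam]; ring] at hquad
  have hKη : K * hmin ≤ η := by
    simpa [hη] using card_nsmul_le_sum _ _ _ fun j hj => (hbound j hj).1
  have hη0 : 0 < η := (mul_pos (Nat.cast_pos.2 hK) hhmin).trans_le hKη
  refine pos_of_mul_sq_lt_of_sub_le (by positivity) (by positivity) hKη hη0 hcond ?_
  have hCα : Cc ≤ Cc * α ^ 2 := le_mul_of_one_le_right hCc (one_le_pow₀ hα)
  nlinarith [(le_abs_self _).trans hquad,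
    mul_le_mul_of_nonneg_right hCα (by positivity : 0 ≤ hmin ^ 2 * η)]

theorem local_average_positivity
    (K : ℕ) (hK : 1 ≤ K)
    (h : ℕ → ℝ)
    (a : ℝ)
    (xhalf xc : ℕ → ℝ)
    (hxhalf0 : xhalf 0 = a)
    (hxhalf : ∀ j ∈ Finset.Icc 1 K, xhalf j = xhalf (j - 1) + h j)
    (hxc : ∀ j ∈ Finset.Icc 1 K, xc j = xhalf (j - 1) + h j / 2)
    (hmin : ℝ) (hhmin : 0 < hmin)
    (α : ℝ) (hα : 1 ≤ α)
    (hbound : ∀ j ∈ Finset.Icc 1 K, hmin ≤ h j ∧ h j ≤ α * hmin)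
    (ρ : ℝ → ℝ) (hρ : ContDiff ℝ 2 ρ)
    (hρnn : ∀ x ∈ Set.Icc a (xhalf K), 0 ≤ ρ x)
    (lam : ℝ)
    (hlam : lam = 1 / 24 * sSup ((fun x => |iteratedDeriv 2 ρ x|) '' Set.Icc a (xhalf K)))
    (ρd : ℕ → ℝ) (Cc : ℝ) (hCc : 0 ≤ Cc)
    (happrox : ∀ j ∈ Finset.Icc 1 K, |ρd j - ρ (xc j)| ≤ Cc * hmin ^ 2)
    (η : ℝ) (hη : η = ∑ j ∈ Finset.Icc 1 K, h j)
    (hcond : (lam + Cc) * α ^ 2 * η ^ 2 <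
      (K : ℝ) ^ 2 * ∫ t in (0 : ℝ)..1, ρ (a + t * η)) :
    0 < ∑ j ∈ Finset.Icc 1 K, h j * ρd j :=
  local_average_positivity_general K hK h a xhalf xc hxhalf0 hxhalf hxc hmin hhmin α hα hbound ρ hρ
    lam hlam ρd Cc hCc happrox η hη hcond
end
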